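/- arXiv:1206.5393 — 4 statements merged into one kernel-verified Lean document; each statement's English description precedes it below -/
import Mathlib

section
/- With Φ as above (Φ(A) = log((1/d)∫_T^{T+d} ψ(s) e^{l(s)A} ds), l(s) = e^{-cs}, ψ > 0 continuous), the second derivative satisfies |Φ''(A)| ≤ e^{-2cT} - e^{-2c(T+d)} for all A ∈ ℝ. In particular Φ'' is bounded. -/
/-!
Up to the constant `log (1 / d)`, `Φ` is the cumulant generating function of `l(s) = e^{-cs}`
under the finite measure `ψ(s) ds` on `[T, T + d]`, so `Φ''(A)` is the variance of `l` under the
exponentially tilted measure. Since `l` takes values in `[m, M] = [e^{-c(T+d)}, e^{-cT}]`,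
Popoviciu's inequality bounds this variance by `((M - m) / 2)² ≤ M² - m²`.
-/

open Real MeasureTheory ProbabilityTheory

namespace ProbabilityTheory

variable {Ω : Type*} {m : MeasurableSpace Ω} {X : Ω → ℝ} {μ : Measure Ω} {a b : ℝ}

lemma abs_iteratedDeriv_two_cgf_le_of_mem_Icc [IsFiniteMeasure μ] [NeZero μ]
    (hm : AEMeasurable X μ) (hb : ∀ᵐ ω ∂μ, X ω ∈ Set.Icc a b) (t : ℝ) :
    |iteratedDeriv 2 (cgf X μ) t| ≤ ((b - a) / 2) ^ 2 := by
  have ht : t ∈ interior (integrableExpSet X μ) := by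
    simp [integrableExpSet, integrable_exp_mul_of_mem_Icc hm hb]
  have := isProbabilityMeasure_tilted (integrable_exp_mul_of_mem_Icc (t := t) hm hb)
  have hac := tilted_absolutelyContinuous μ (t * X ·)
  rw [← variance_tilted_mul ht, abs_of_nonneg (variance_nonneg _ _)]
  exact variance_le_sq_of_bounded (hac hb) (hm.mono_ac hac)

end ProbabilityTheory

section WithDensity

variable {α : Type*} [MeasurableSpace α] {ν : Measure α} {ψ : α → ℝ}

lemma integral_withDensity_ofReal (hψ : AEMeasurable ψ ν) (hψ_nonneg : 0 ≤ᵐ[ν] ψ) (g : α → ℝ) :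
    ∫ x, g x ∂ν.withDensity (fun x ↦ ENNReal.ofReal (ψ x)) = ∫ x, ψ x * g x ∂ν := by
  rw [integral_withDensity_eq_integral_toReal_smul₀ hψ.ennreal_ofReal
    (ae_of_all _ fun _ ↦ ENNReal.ofReal_lt_top)]
  refine integral_congr_ae ?_
  filter_upwards [hψ_nonneg] with x hx
  simp [ENNReal.toReal_ofReal hx]

lemma neZero_withDensity_ofReal (hψ : AEMeasurable ψ ν) (hψ_nonneg : 0 ≤ᵐ[ν] ψ)
    (hψ_pos : 0 < ∫ x, ψ x ∂ν) :
    NeZero (ν.withDensity fun x ↦ ENNReal.ofReal (ψ x)) := by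
  have hmass := integral_withDensity_ofReal hψ hψ_nonneg 1
  refine ⟨fun h ↦ hψ_pos.ne' ?_⟩
  simpa [h] using hmass.symm

lemma mgf_withDensity_ofReal (hψ : AEMeasurable ψ ν) (hψ_nonneg : 0 ≤ᵐ[ν] ψ) (X : α → ℝ)
    (t : ℝ) :
    mgf X (ν.withDensity fun x ↦ ENNReal.ofReal (ψ x)) t = ∫ x, ψ x * exp (t * X x) ∂ν :=
  integral_withDensity_ofReal hψ hψ_nonneg _

end WithDensity

lemma setIntegral_Icc_pos {f : ℝ → ℝ} {a b : ℝ} (hab : a < b)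
    (hf : ContinuousOn f (Set.Icc a b)) (hpos : ∀ x ∈ Set.Icc a b, 0 < f x) :
    0 < ∫ x in Set.Icc a b, f x := by
  rw [setIntegral_pos_iff_support_of_nonneg_ae
    ((ae_restrict_iff' measurableSet_Icc).2 (ae_of_all _ fun x hx ↦ (hpos x hx).le))
    hf.integrableOn_Icc,
    Set.inter_eq_right.2 fun x hx ↦ Function.mem_support.2 (hpos x hx).ne']
  simpa using hab

theorem Phi_second_deriv_bound_general
    (c T d : ℝ) (hc : 0 < c) (hd : 0 < d)
    (ψ : ℝ → ℝ) (hψcont : ContinuousOn ψ (Set.Icc T (T + d)))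
    (hψpos : ∀ s ∈ Set.Icc T (T + d), 0 < ψ s)
    (Φ : ℝ → ℝ)
    (hΦ : ∀ A : ℝ, Φ A =
      Real.log ((1 / d) * ∫ s in Set.Icc T (T + d), ψ s * Real.exp (Real.exp (-c * s) * A))) :
    ∀ A : ℝ, |deriv (deriv Φ) A| ≤ Real.exp (-2 * c * T) - Real.exp (-2 * c * (T + d)) := by
  intro A
  set l : ℝ → ℝ := fun s ↦ exp (-c * s)
  set ν := volume.restrict (Set.Icc T (T + d))
  set μ := ν.withDensity fun s ↦ ENNReal.ofReal (ψ s)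
  have hψ_meas : AEMeasurable ψ ν := hψcont.aemeasurable measurableSet_Icc
  have hψ_nonneg : 0 ≤ᵐ[ν] ψ :=
    (ae_restrict_iff' measurableSet_Icc).2 (ae_of_all _ fun s hs ↦ (hψpos s hs).le)
  have : IsFiniteMeasure μ := isFiniteMeasure_withDensity_ofReal hψcont.integrableOn_Icc.2
  have : NeZero μ := neZero_withDensity_ofReal hψ_meas hψ_nonneg
    (setIntegral_Icc_pos (by linarith) hψcont hψpos)
  have hl : ∀ᵐ s ∂μ, l s ∈ Set.Icc (exp (-c * (T + d))) (exp (-c * T)) := by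
    refine withDensity_absolutelyContinuous _ _ ((ae_restrict_iff' measurableSet_Icc).2
      (ae_of_all _ fun s hs ↦ ⟨exp_le_exp.2 ?_, exp_le_exp.2 ?_⟩)) <;> nlinarith [hs.1, hs.2]
  have hΦ_cgf : Φ = fun A ↦ log (1 / d) + cgf l μ A := funext fun A ↦ by
    have hmgf := mgf_withDensity_ofReal hψ_meas hψ_nonneg l A
    simp_rw [mul_comm A] at hmgf
    rw [hΦ, cgf, ← hmgf, log_mul (by positivity)
      (mgf_pos' (NeZero.ne μ) (integrable_exp_mul_of_mem_Icc (by fun_prop) hl)).ne']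
  calc |deriv (deriv Φ) A| = |iteratedDeriv 2 (cgf l μ) A| := by
        rw [hΦ_cgf, deriv_const_add', iteratedDeriv_succ, iteratedDeriv_one]
    _ ≤ ((exp (-c * T) - exp (-c * (T + d))) / 2) ^ 2 :=
        abs_iteratedDeriv_two_cgf_le_of_mem_Icc (by fun_prop) hl A
    _ ≤ exp (-c * T) ^ 2 - exp (-c * (T + d)) ^ 2 := by
        have hm := exp_pos (-c * (T + d))
        have hmM : exp (-c * (T + d)) ≤ exp (-c * T) := exp_le_exp.2 (by nlinarith)
        nlinarith
    _ = exp (-2 * c * T) - exp (-2 * c * (T + d)) := by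
        simp only [← exp_nat_mul]; ring_nf

/-- The second derivative of the log-forward-curve functional Φ is bounded:
`|Φ''(A)| ≤ e^{-2cT} - e^{-2c(T+d)}`. -/
theorem Phi_second_deriv_bound
    (c T d : ℝ) (hc : 0 < c) (hT : 0 < T) (hd : 0 < d)
    (ψ : ℝ → ℝ) (hψcont : ContinuousOn ψ (Set.Icc T (T + d)))
    (hψpos : ∀ s ∈ Set.Icc T (T + d), 0 < ψ s)
    (Φ : ℝ → ℝ)
    (hΦ : ∀ A : ℝ, Φ A =
      Real.log ((1 / d) * ∫ s in Set.Icc T (T + d), ψ s * Real.exp (Real.exp (-c * s) * A))) :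
    ∀ A : ℝ, |deriv (deriv Φ) A| ≤ Real.exp (-2 * c * T) - Real.exp (-2 * c * (T + d)) :=
  Phi_second_deriv_bound_general c T d hc hd ψ hψcont hψpos Φ hΦ
end

section
/- With γ(t,z,y) as in the electricity futures model, the z-derivative satisfies |∂_z γ(t,z,y)| ≤ e^{cd} |y| for all t ∈ [0,T], z, y ∈ ℝ. In particular z ↦ γ(t,z,y) is Lipschitz with constant e^{cd}|y|. -/
/-!
`Φ` is the logarithm of `A ↦ ∫ ψ(s) exp(r(s) A) ds` with `r(s) = e^{-cs}`, so `Φ'` is the mean of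
`r` under the exponentially tilted density `ψ(s) exp(r(s) A)` and `Φ''` is its variance. Since
`r` takes values in `[m, M] = [e^{-c(T+d)}, e^{-cT}]` on `[T, T+d]`, we get `m ≤ Φ' ≤ M` and
`|Φ''| ≤ M² - m²`. With `a = Φ⁻¹(z)` and `h = y e^{ct}` the chain rule gives
`∂_z γ = Φ'(a + h) / Φ'(a) - 1`, of absolute value at most `(M² - m²)|h| / m ≤ e^{c(d+t-T)}|y|`.
-/

open Real MeasureTheory Set

section TiltedMoment

variable {a b : ℝ} {ψ r : ℝ → ℝ}

noncomputable def tiltedMoment (a b : ℝ) (ψ r : ℝ → ℝ) (k : ℕ) (A : ℝ) : ℝ :=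
  ∫ s in Icc a b, ψ s * r s ^ k * exp (r s * A)

lemma integrableOn_tiltedMoment (hψ : ContinuousOn ψ (Icc a b)) (hr : ContinuousOn r (Icc a b))
    (k : ℕ) (A : ℝ) : IntegrableOn (fun s ↦ ψ s * r s ^ k * exp (r s * A)) (Icc a b) :=
  ((hψ.mul (hr.pow k)).mul (hr.mul continuousOn_const).rexp).integrableOn_compact isCompact_Icc

lemma tiltedMoment_pos (hab : a < b) (hψ : ContinuousOn ψ (Icc a b))
    (hr : ContinuousOn r (Icc a b)) (hψ₀ : ∀ s ∈ Icc a b, 0 < ψ s)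
    (hr₀ : ∀ s ∈ Icc a b, 0 < r s) (k : ℕ) (A : ℝ) : 0 < tiltedMoment a b ψ r k A := by
  rw [tiltedMoment, integral_Icc_eq_integral_Ioc, ← intervalIntegral.integral_of_le hab.le]
  refine intervalIntegral.intervalIntegral_pos_of_pos_on ?_ (fun s hs ↦ ?_) hab
  · exact (intervalIntegrable_iff_integrableOn_Icc_of_le hab.le).2
      (integrableOn_tiltedMoment hψ hr k A)
  · have hs := Ioo_subset_Icc_self hs
    have := hψ₀ s hs
    have := hr₀ s hs
    positivity

lemma hasDerivAt_tiltedMoment (hψ : ContinuousOn ψ (Icc a b)) (hr : ContinuousOn r (Icc a b))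
    (k : ℕ) (A : ℝ) :
    HasDerivAt (tiltedMoment a b ψ r k) (tiltedMoment a b ψ r (k + 1) A) A := by
  obtain ⟨R, hR⟩ := isCompact_Icc.exists_bound_of_continuousOn hr
  have hmeas (j : ℕ) (x : ℝ) := (integrableOn_tiltedMoment hψ hr j x).aestronglyMeasurable
  refine (hasDerivAt_integral_of_dominated_loc_of_deriv_le
    (F' := fun x s ↦ ψ s * r s ^ (k + 1) * exp (r s * x))
    (bound := fun s ↦ |ψ s| * R ^ (k + 1) * exp (R * (|A| + 1)))
    (Metric.ball_mem_nhds A one_pos) (.of_forall (hmeas k)) (integrableOn_tiltedMoment hψ hr k A)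
    (hmeas (k + 1) A) ?_ ?_ (.of_forall fun s x _ ↦ ?_)).2
  · refine (ae_restrict_iff' measurableSet_Icc).2 (.of_forall fun s hs x hx ↦ ?_)
    have hrs : |r s| ≤ R := hR s hs
    have hx : |x| ≤ |A| + 1 := by
      rw [Metric.mem_ball, Real.dist_eq] at hx
      linarith [abs_sub_abs_le_abs_sub x A]
    have hexp : r s * x ≤ R * (|A| + 1) :=
      (le_abs_self _).trans (by rw [abs_mul]; gcongr; exact (abs_nonneg _).trans hrs)
    rw [norm_mul, norm_mul, norm_pow, Real.norm_eq_abs, Real.norm_eq_abs,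
      Real.norm_of_nonneg (exp_nonneg _)]
    have hR₀ : 0 ≤ R := (abs_nonneg _).trans hrs
    gcongr
  · exact ((hψ.abs.mul continuousOn_const).mul continuousOn_const).integrableOn_compact
      isCompact_Icc
  · exact (((hasDerivAt_id' x).const_mul (r s)).exp.const_mul (ψ s * r s ^ k)).congr_deriv
      (by ring)

lemma tiltedMoment_integrand_nonneg (hψ₀ : ∀ s ∈ Icc a b, 0 ≤ ψ s)
    (hr₀ : ∀ s ∈ Icc a b, 0 ≤ r s) (k : ℕ) (A : ℝ) {s : ℝ} (hs : s ∈ Icc a b) :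
    0 ≤ ψ s * r s ^ k * exp (r s * A) := by
  have := hψ₀ s hs
  have := hr₀ s hs
  positivity

lemma tiltedMoment_succ_le (hψ : ContinuousOn ψ (Icc a b)) (hr : ContinuousOn r (Icc a b))
    (hψ₀ : ∀ s ∈ Icc a b, 0 ≤ ψ s) (hr₀ : ∀ s ∈ Icc a b, 0 ≤ r s) {M : ℝ}
    (hM : ∀ s ∈ Icc a b, r s ≤ M) (k : ℕ) (A : ℝ) :
    tiltedMoment a b ψ r (k + 1) A ≤ M * tiltedMoment a b ψ r k A := by
  rw [tiltedMoment, tiltedMoment, ← integral_const_mul]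
  refine setIntegral_mono_on (integrableOn_tiltedMoment hψ hr _ A)
    ((integrableOn_tiltedMoment hψ hr k A).const_mul M) measurableSet_Icc fun s hs ↦ ?_
  have := mul_le_mul_of_nonneg_right (hM s hs) (tiltedMoment_integrand_nonneg hψ₀ hr₀ k A hs)
  linear_combination this

lemma le_tiltedMoment_succ (hψ : ContinuousOn ψ (Icc a b)) (hr : ContinuousOn r (Icc a b))
    (hψ₀ : ∀ s ∈ Icc a b, 0 ≤ ψ s) (hr₀ : ∀ s ∈ Icc a b, 0 ≤ r s) {m : ℝ}
    (hm : ∀ s ∈ Icc a b, m ≤ r s) (k : ℕ) (A : ℝ) :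
    m * tiltedMoment a b ψ r k A ≤ tiltedMoment a b ψ r (k + 1) A := by
  rw [tiltedMoment, tiltedMoment, ← integral_const_mul]
  refine setIntegral_mono_on ((integrableOn_tiltedMoment hψ hr k A).const_mul m)
    (integrableOn_tiltedMoment hψ hr _ A) measurableSet_Icc fun s hs ↦ ?_
  have := mul_le_mul_of_nonneg_right (hm s hs) (tiltedMoment_integrand_nonneg hψ₀ hr₀ k A hs)
  linear_combination this

lemma tiltedMoment_succ_div_mem_Icc (hab : a < b) (hψ : ContinuousOn ψ (Icc a b))
    (hr : ContinuousOn r (Icc a b)) (hψ₀ : ∀ s ∈ Icc a b, 0 < ψ s) {m M : ℝ} (hm₀ : 0 < m)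
    (hrm : ∀ s ∈ Icc a b, r s ∈ Icc m M) (k : ℕ) (A : ℝ) :
    tiltedMoment a b ψ r (k + 1) A / tiltedMoment a b ψ r k A ∈ Icc m M := by
  have hr₀ s hs : 0 < r s := hm₀.trans_le (hrm s hs).1
  have hψ₀' s hs := (hψ₀ s hs).le
  have hr₀' s hs := (hr₀ s hs).le
  have hF := tiltedMoment_pos hab hψ hr hψ₀ hr₀ k A
  rw [mem_Icc, le_div_iff₀ hF, div_le_iff₀ hF]
  exact ⟨le_tiltedMoment_succ hψ hr hψ₀' hr₀' (fun s hs ↦ (hrm s hs).1) k A,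
    tiltedMoment_succ_le hψ hr hψ₀' hr₀' (fun s hs ↦ (hrm s hs).2) k A⟩

noncomputable def tiltedMean (a b : ℝ) (ψ r : ℝ → ℝ) (A : ℝ) : ℝ :=
  tiltedMoment a b ψ r 1 A / tiltedMoment a b ψ r 0 A

lemma tiltedMean_mem_Icc (hab : a < b) (hψ : ContinuousOn ψ (Icc a b))
    (hr : ContinuousOn r (Icc a b)) (hψ₀ : ∀ s ∈ Icc a b, 0 < ψ s) {m M : ℝ} (hm₀ : 0 < m)
    (hrm : ∀ s ∈ Icc a b, r s ∈ Icc m M) (A : ℝ) : tiltedMean a b ψ r A ∈ Icc m M :=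
  tiltedMoment_succ_div_mem_Icc hab hψ hr hψ₀ hm₀ hrm 0 A

noncomputable def tiltedVariance (a b : ℝ) (ψ r : ℝ → ℝ) (A : ℝ) : ℝ :=
  tiltedMoment a b ψ r 2 A / tiltedMoment a b ψ r 0 A - tiltedMean a b ψ r A ^ 2

lemma hasDerivAt_log_const_mul_tiltedMoment (hab : a < b) (hψ : ContinuousOn ψ (Icc a b))
    (hr : ContinuousOn r (Icc a b)) (hψ₀ : ∀ s ∈ Icc a b, 0 < ψ s)
    (hr₀ : ∀ s ∈ Icc a b, 0 < r s) {κ : ℝ} (hκ : κ ≠ 0) (A : ℝ) :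
    HasDerivAt (fun A ↦ log (κ * tiltedMoment a b ψ r 0 A)) (tiltedMean a b ψ r A) A := by
  have hF₀ := (tiltedMoment_pos hab hψ hr hψ₀ hr₀ 0 A).ne'
  refine (((hasDerivAt_tiltedMoment hψ hr 0 A).const_mul κ).log
    (mul_ne_zero hκ hF₀)).congr_deriv ?_
  rw [tiltedMean, mul_div_mul_left _ _ hκ]

lemma hasDerivAt_tiltedMean (hab : a < b) (hψ : ContinuousOn ψ (Icc a b))
    (hr : ContinuousOn r (Icc a b)) (hψ₀ : ∀ s ∈ Icc a b, 0 < ψ s)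
    (hr₀ : ∀ s ∈ Icc a b, 0 < r s) (A : ℝ) :
    HasDerivAt (tiltedMean a b ψ r) (tiltedVariance a b ψ r A) A := by
  have hF₀ := (tiltedMoment_pos hab hψ hr hψ₀ hr₀ 0 A).ne'
  refine ((hasDerivAt_tiltedMoment hψ hr 1 A).div (hasDerivAt_tiltedMoment hψ hr 0 A)
    hF₀).congr_deriv ?_
  rw [tiltedVariance, tiltedMean]
  field_simp

lemma abs_tiltedVariance_le (hab : a < b) (hψ : ContinuousOn ψ (Icc a b))
    (hr : ContinuousOn r (Icc a b)) (hψ₀ : ∀ s ∈ Icc a b, 0 < ψ s) {m M : ℝ} (hm₀ : 0 < m)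
    (hrm : ∀ s ∈ Icc a b, r s ∈ Icc m M) (A : ℝ) :
    |tiltedVariance a b ψ r A| ≤ M ^ 2 - m ^ 2 := by
  have hr₀ s hs : 0 < r s := hm₀.trans_le (hrm s hs).1
  have hF₁ := (tiltedMoment_pos hab hψ hr hψ₀ hr₀ 1 A).ne'
  obtain ⟨hm₁, hM₁⟩ := tiltedMean_mem_Icc hab hψ hr hψ₀ hm₀ hrm A
  obtain ⟨hm₂, hM₂⟩ := tiltedMoment_succ_div_mem_Icc hab hψ hr hψ₀ hm₀ hrm 1 A
  have hsplit : tiltedMoment a b ψ r 2 A / tiltedMoment a b ψ r 0 A =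
      tiltedMoment a b ψ r 2 A / tiltedMoment a b ψ r 1 A * tiltedMean a b ψ r A := by
    rw [tiltedMean, div_mul_div_cancel₀ hF₁]
  rw [tiltedVariance, hsplit]
  apply abs_sub_le_of_le_of_le <;> nlinarith

lemma abs_tiltedMean_sub_le (hab : a < b) (hψ : ContinuousOn ψ (Icc a b))
    (hr : ContinuousOn r (Icc a b)) (hψ₀ : ∀ s ∈ Icc a b, 0 < ψ s) {m M : ℝ} (hm₀ : 0 < m)
    (hrm : ∀ s ∈ Icc a b, r s ∈ Icc m M) (u v : ℝ) :
    |tiltedMean a b ψ r u - tiltedMean a b ψ r v| ≤ (M ^ 2 - m ^ 2) * |u - v| := by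
  have hr₀ s hs : 0 < r s := hm₀.trans_le (hrm s hs).1
  simpa only [Real.norm_eq_abs] using convex_univ.norm_image_sub_le_of_norm_hasDerivWithin_le
    (fun A _ ↦ (hasDerivAt_tiltedMean hab hψ hr hψ₀ hr₀ A).hasDerivWithinAt)
    (fun A _ ↦ abs_tiltedVariance_le hab hψ hr hψ₀ hm₀ hrm A) (mem_univ v) (mem_univ u)

end TiltedMoment

section ShiftConjugate

variable {Φ Φ' Ψ : ℝ → ℝ}

lemma StrictMono.continuous_of_leftInverse (hΦ : StrictMono Φ)
    (hΦΨ : Function.LeftInverse Φ Ψ) : Continuous Ψ :=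
  Monotone.continuous_of_surjective (fun z₁ z₂ h ↦ by rwa [← hΦ.le_iff_le, hΦΨ, hΦΨ])
    fun A ↦ ⟨Φ A, hΦ.injective (hΦΨ (Φ A))⟩

lemma hasDerivAt_leftInverse (hΦ : ∀ x, HasDerivAt Φ (Φ' x) x) (hΦ' : ∀ x, 0 < Φ' x)
    (hΦΨ : Function.LeftInverse Φ Ψ) (z : ℝ) : HasDerivAt Ψ (Φ' (Ψ z))⁻¹ z :=
  HasDerivAt.of_local_left_inverse
    ((strictMono_of_hasDerivAt_pos hΦ hΦ').continuous_of_leftInverse hΦΨ).continuousAt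
    (hΦ (Ψ z)) (hΦ' (Ψ z)).ne' (.of_forall hΦΨ)

lemma hasDerivAt_conj_add_sub (hΦ : ∀ x, HasDerivAt Φ (Φ' x) x) (hΦ' : ∀ x, 0 < Φ' x)
    (hΦΨ : Function.LeftInverse Φ Ψ) (h z : ℝ) :
    HasDerivAt (fun z ↦ Φ (Ψ z + h) - z) (Φ' (Ψ z + h) / Φ' (Ψ z) - 1) z :=
  (((hΦ _).comp z ((hasDerivAt_leftInverse hΦ hΦ' hΦΨ z).add_const h)).sub
    (hasDerivAt_id z)).congr_deriv (by rw [div_eq_mul_inv])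

lemma abs_div_sub_one_le_of_lipschitz {m L : ℝ} (hm₀ : 0 < m) (hm : ∀ x, m ≤ Φ' x)
    (hL : ∀ u v, |Φ' u - Φ' v| ≤ L * |u - v|) (x h : ℝ) :
    |Φ' (x + h) / Φ' x - 1| ≤ L * |h| / m := by
  have hx := hm₀.trans_le (hm x)
  rw [div_sub_one hx.ne', abs_div, abs_of_pos hx]
  have := hL (x + h) x
  rw [add_sub_cancel_left] at this
  exact div_le_div₀ ((abs_nonneg _).trans this) this hm₀ (hm x)

end ShiftConjugate

theorem gamma_z_lipschitz_general
    (c T d : ℝ) (hc : 0 < c) (hd : 0 < d)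
    (ψ : ℝ → ℝ) (hψcont : ContinuousOn ψ (Set.Icc T (T + d)))
    (hψpos : ∀ s ∈ Set.Icc T (T + d), 0 < ψ s)
    (Φ Ψ : ℝ → ℝ)
    (hΦ : ∀ A : ℝ, Φ A =
      Real.log ((1 / d) * ∫ s in Set.Icc T (T + d), ψ s * Real.exp (Real.exp (-c * s) * A)))
    (hΦΨ : ∀ z : ℝ, Φ (Ψ z) = z)
    (γ : ℝ → ℝ → ℝ → ℝ)
    (hγ : ∀ t z y : ℝ, γ t z y = Φ (Ψ z + y * Real.exp (c * t)) - z) :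
    ∀ t y : ℝ, 0 ≤ t → t ≤ T →
      (∀ z : ℝ, |deriv (fun z' => γ t z' y) z| ≤ Real.exp (c * d) * |y|) ∧
      (∀ z₁ z₂ : ℝ, |γ t z₁ y - γ t z₂ y| ≤ Real.exp (c * d) * |y| * |z₁ - z₂|) := by
  intro t y _ htT
  set r : ℝ → ℝ := fun s ↦ exp (-c * s)
  set m := exp (-c * (T + d))
  set M := exp (-c * T)
  set P := tiltedMean T (T + d) ψ r
  have hab : T < T + d := by linarith
  have hr : ContinuousOn r (Icc T (T + d)) := by fun_prop
  have hrm (s : ℝ) (hs : s ∈ Icc T (T + d)) : r s ∈ Icc m M :=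
    ⟨exp_le_exp.2 (by nlinarith [hs.2]), exp_le_exp.2 (by nlinarith [hs.1])⟩
  have hP A : P A ∈ Icc m M := tiltedMean_mem_Icc hab hψcont hr hψpos (exp_pos _) hrm A
  have hΦ' A : HasDerivAt Φ (P A) A := by
    have := hasDerivAt_log_const_mul_tiltedMoment hab hψcont hr hψpos
      (fun s _ ↦ exp_pos (-c * s)) (one_div_ne_zero hd.ne') A
    simp only [tiltedMoment, pow_zero, mul_one] at this
    rwa [funext hΦ]
  set h := y * exp (c * t)
  have hderiv z : HasDerivAt (fun z ↦ γ t z y) (P (Ψ z + h) / P (Ψ z) - 1) z := by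
    simpa only [hγ] using
      hasDerivAt_conj_add_sub hΦ' (fun A ↦ (exp_pos _).trans_le (hP A).1) hΦΨ h z
  have hbound z : |P (Ψ z + h) / P (Ψ z) - 1| ≤ exp (c * d) * |y| :=
    calc _ ≤ (M ^ 2 - m ^ 2) * |h| / m :=
          abs_div_sub_one_le_of_lipschitz (exp_pos _) (fun A ↦ (hP A).1)
            (abs_tiltedMean_sub_le hab hψcont hr hψpos (exp_pos _) hrm) _ _
      _ ≤ M ^ 2 * |h| / m := by gcongr; exact sub_le_self _ (sq_nonneg m)
      _ = exp (c * (t - T) + c * d) * |y| := by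
          have hexp : M ^ 2 * exp (c * t) = exp (c * (t - T) + c * d) * m := by
            simp only [M, m, ← exp_nat_mul, ← exp_add]
            ring_nf
          rw [abs_mul, abs_of_pos (exp_pos _), div_eq_iff (exp_pos _).ne']
          linear_combination |y| * hexp
      _ ≤ exp (c * d) * |y| := by gcongr; nlinarith
  refine ⟨fun z ↦ (hderiv z).deriv ▸ hbound z, fun z₁ z₂ ↦ ?_⟩
  simpa only [Real.norm_eq_abs] using convex_univ.norm_image_sub_le_of_norm_hasDerivWithin_le
    (fun z _ ↦ (hderiv z).hasDerivWithinAt) (fun z _ ↦ hbound z) (mem_univ z₂) (mem_univ z₁)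

/-- The `z`-derivative of the jump function `γ(t,z,y)` of the electricity
futures model is bounded by `e^{cd}|y|`; in particular `z ↦ γ(t,z,y)` is
Lipschitz with constant `e^{cd}|y|`. -/
theorem gamma_z_lipschitz
    (c T d : ℝ) (hc : 0 < c) (hT : 0 < T) (hd : 0 < d)
    (ψ : ℝ → ℝ) (hψcont : ContinuousOn ψ (Set.Icc T (T + d)))
    (hψpos : ∀ s ∈ Set.Icc T (T + d), 0 < ψ s)
    (Φ Ψ : ℝ → ℝ)
    (hΦ : ∀ A : ℝ, Φ A =
      Real.log ((1 / d) * ∫ s in Set.Icc T (T + d), ψ s * Real.exp (Real.exp (-c * s) * A)))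
    (hΨΦ : ∀ A : ℝ, Ψ (Φ A) = A) (hΦΨ : ∀ z : ℝ, Φ (Ψ z) = z)
    (γ : ℝ → ℝ → ℝ → ℝ)
    (hγ : ∀ t z y : ℝ, γ t z y = Φ (Ψ z + y * Real.exp (c * t)) - z) :
    ∀ t y : ℝ, 0 ≤ t → t ≤ T →
      (∀ z : ℝ, |deriv (fun z' => γ t z' y) z| ≤ Real.exp (c * d) * |y|) ∧
      (∀ z₁ z₂ : ℝ, |γ t z₁ y - γ t z₂ y| ≤ Real.exp (c * d) * |y| * |z₁ - z₂|) :=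
  gamma_z_lipschitz_general c T d hc hd ψ hψcont hψpos Φ Ψ hΦ hΦΨ γ hγ
end

section
/- Let (Ω, F, P) be a probability space, H₁, H₂ square-integrable random variables, x ∈ ℝ, and let A be a cone of admissible integrands such that the gains G(θ) = ∫ θ dS are square integrable for θ ∈ A. Define v_i(x) = inf_{θ∈A} E[(H_i − x − G(θ))²] and x*_i = argmin_x v_i(x) (assuming the infimum over x is attained and v_i(x) = a x² + b_i x + c_i with a > 0). Then |x*₁ − x*₂| ≤ a^{-1/2} ‖H₁ − H₂‖_{L²}. -/
open MeasureTheory Filter Topology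

/-! The square root of `vᵢ(x) = ⨅ θ, E[(Hᵢ - x - G θ)²]` is the `L²` distance from `Hᵢ - x` to the
set of gains, hence `|√v₁(x) - √v₂(x)| ≤ ‖H₁ - H₂‖₂` for every `x`. Completing the square,
`vᵢ(x) = a (x - x*ᵢ)² + vᵢ(x*ᵢ)` with `vᵢ(x*ᵢ) ≥ 0`, so `√vᵢ(x) = √a (x - x*ᵢ) + o(1)` as `x → ∞`:
the difference `√v₁(x) - √v₂(x)` tends to `√a (x*₂ - x*₁)`, which is therefore at most
`‖H₁ - H₂‖₂`, and symmetrically. -/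

section L2Distance

variable {Ω : Type*} {m : MeasurableSpace Ω} {μ : Measure Ω}

theorem MeasureTheory.MemLp.norm_toLp_eq_sqrt_integral_sq {f : Ω → ℝ} (hf : MemLp f 2 μ) :
    ‖hf.toLp f‖ = √(∫ ω, f ω ^ 2 ∂μ) := by
  rw [← Real.sqrt_sq (norm_nonneg _), ← real_inner_self_eq_norm_sq, L2.inner_def]
  congr 1
  refine integral_congr_ae ?_
  filter_upwards [hf.coeFn_toLp] with ω hω
  simp [hω, sq]

theorem MeasureTheory.MemLp.dist_toLp_eq_sqrt_integral_sq_sub {f g : Ω → ℝ} (hf : MemLp f 2 μ)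
    (hg : MemLp g 2 μ) : dist (hf.toLp f) (hg.toLp g) = √(∫ ω, (f ω - g ω) ^ 2 ∂μ) := by
  rw [dist_eq_norm, ← MemLp.toLp_sub, (hf.sub hg).norm_toLp_eq_sqrt_integral_sq]
  rfl

variable {ι : Type*} [Nonempty ι] {G : ι → Ω → ℝ}

theorem sqrt_iInf_integral_sq_sub_eq_infDist (hG : ∀ θ, MemLp (G θ) 2 μ) {K : Ω → ℝ}
    (hK : MemLp K 2 μ) :
    √(⨅ θ, ∫ ω, (K ω - G θ ω) ^ 2 ∂μ) =
      Metric.infDist (hK.toLp K) (Set.range fun θ => (hG θ).toLp (G θ)) := by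
  rw [Metric.infDist_eq_iInf, iInf_range' (dist (hK.toLp K)) fun θ => (hG θ).toLp (G θ),
    Monotone.map_ciInf_of_continuousAt Real.continuous_sqrt.continuousAt
      (fun _ _ => Real.sqrt_le_sqrt) ⟨0, ?_⟩]
  · simp_rw [hK.dist_toLp_eq_sqrt_integral_sq_sub (hG _)]
  · rintro _ ⟨θ, rfl⟩
    exact integral_nonneg fun ω => sq_nonneg _

theorem abs_sqrt_iInf_integral_sq_sub_sub_le (hG : ∀ θ, MemLp (G θ) 2 μ) {K₁ K₂ : Ω → ℝ}
    (hK₁ : MemLp K₁ 2 μ) (hK₂ : MemLp K₂ 2 μ) :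
    |√(⨅ θ, ∫ ω, (K₁ ω - G θ ω) ^ 2 ∂μ) - √(⨅ θ, ∫ ω, (K₂ ω - G θ ω) ^ 2 ∂μ)| ≤
      √(∫ ω, (K₁ ω - K₂ ω) ^ 2 ∂μ) := by
  rw [sqrt_iInf_integral_sq_sub_eq_infDist hG hK₁, sqrt_iInf_integral_sq_sub_eq_infDist hG hK₂,
    ← hK₁.dist_toLp_eq_sqrt_integral_sq_sub hK₂, ← Real.dist_eq]
  simpa using (Metric.lipschitz_infDist_pt _).dist_le_mul (hK₁.toLp K₁) (hK₂.toLp K₂)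

end L2Distance

theorem sqrt_sq_add_le {t m : ℝ} (ht : 0 < t) (hm : 0 ≤ m) : √(t ^ 2 + m) ≤ t + m / (2 * t) := by
  rw [Real.sqrt_le_iff]
  refine ⟨by positivity, ?_⟩
  have : (t + m / (2 * t)) ^ 2 = t ^ 2 + m + (m / (2 * t)) ^ 2 := by
    field_simp
    ring
  rw [this]
  linarith [sq_nonneg (m / (2 * t))]

theorem quadratic_eq_vertex_form {a : ℝ} (ha : a ≠ 0) (b c x : ℝ) :
    a * x ^ 2 + b * x + c = a * (x - -b / (2 * a)) ^ 2 + (c - b ^ 2 / (4 * a)) := by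
  field_simp
  ring

theorem sqrt_mul_sub_le_of_sqrt_quadratic_sub_le {a x₁ x₂ m₁ m₂ N : ℝ} (ha : 0 < a)
    (hm₁ : 0 ≤ m₁) (hm₂ : 0 ≤ m₂)
    (h : ∀ x, √(a * (x - x₁) ^ 2 + m₁) - √(a * (x - x₂) ^ 2 + m₂) ≤ N) :
    √a * (x₂ - x₁) ≤ N := by
  have hsa : 0 < √a := Real.sqrt_pos.2 ha
  have hlim : Tendsto (fun x => N + m₂ / (2 * (√a * (x - x₂)))) atTop (𝓝 N) := by
    have hden : Tendsto (fun x => 2 * (√a * (x - x₂))) atTop atTop := by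
      simp_rw [sub_eq_add_neg]
      exact ((tendsto_id.atTop_add tendsto_const_nhds).const_mul_atTop hsa).const_mul_atTop
        two_pos
    simpa using tendsto_const_nhds.add (tendsto_const_nhds.div_atTop hden)
  refine ge_of_tendsto hlim (eventually_gt_atTop x₂ |>.mono fun x hx => ?_)
  have ht : 0 < √a * (x - x₂) := mul_pos hsa (sub_pos.2 hx)
  have hsq : ∀ y, a * y ^ 2 = (√a * y) ^ 2 := fun y => by rw [mul_pow, Real.sq_sqrt ha.le]
  have hlow : √a * (x - x₁) ≤ √(a * (x - x₁) ^ 2 + m₁) := by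
    rw [hsq]
    exact (le_abs_self _).trans ((Real.sqrt_sq_eq_abs _).symm.le.trans
      (Real.sqrt_le_sqrt (le_add_of_nonneg_right hm₁)))
  have hup := sqrt_sq_add_le ht hm₂
  rw [← hsq] at hup
  linarith [h x]

theorem abs_neg_div_sub_neg_div_le {a b₁ b₂ c₁ c₂ N : ℝ} (ha : 0 < a)
    (h₁ : ∀ x, 0 ≤ a * x ^ 2 + b₁ * x + c₁) (h₂ : ∀ x, 0 ≤ a * x ^ 2 + b₂ * x + c₂)
    (h : ∀ x, |√(a * x ^ 2 + b₁ * x + c₁) - √(a * x ^ 2 + b₂ * x + c₂)| ≤ N) :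
    |(-b₁ / (2 * a)) - (-b₂ / (2 * a))| ≤ (√a)⁻¹ * N := by
  have hvertex := quadratic_eq_vertex_form ha.ne'
  have hmin : ∀ b c, (∀ x, 0 ≤ a * x ^ 2 + b * x + c) → 0 ≤ c - b ^ 2 / (4 * a) := fun b c hq => by
    simpa [hvertex b c] using hq (-b / (2 * a))
  simp only [hvertex] at h
  generalize -b₁ / (2 * a) = x₁ at h ⊢
  generalize -b₂ / (2 * a) = x₂ at h ⊢
  have h₁₂ := sqrt_mul_sub_le_of_sqrt_quadratic_sub_le ha (hmin _ _ h₁) (hmin _ _ h₂)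
    fun x => (le_abs_self _).trans (h x)
  have h₂₁ := sqrt_mul_sub_le_of_sqrt_quadratic_sub_le ha (hmin _ _ h₂) (hmin _ _ h₁)
    fun x => (le_abs_self _).trans ((abs_sub_comm _ _).trans_le (h x))
  rw [le_inv_mul_iff₀ (Real.sqrt_pos.2 ha)]
  rcases abs_choice (x₁ - x₂) with hx | hx <;> rw [hx] <;> linarith

theorem quadratic_hedging_price_stability_general
    {Ω : Type*} {m : MeasurableSpace Ω} {μ : Measure Ω} [IsProbabilityMeasure μ]
    {ι : Type*} [Nonempty ι] (G : ι → Ω → ℝ)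
    (hG : ∀ θ, MemLp (G θ) 2 μ)
    (H₁ H₂ : Ω → ℝ) (hH₁ : MemLp H₁ 2 μ) (hH₂ : MemLp H₂ 2 μ)
    (a b₁ b₂ c₁ c₂ : ℝ) (ha : 0 < a)
    (hv₁ : ∀ x : ℝ, (⨅ θ : ι, ∫ ω, (H₁ ω - x - G θ ω) ^ 2 ∂μ) = a * x ^ 2 + b₁ * x + c₁)
    (hv₂ : ∀ x : ℝ, (⨅ θ : ι, ∫ ω, (H₂ ω - x - G θ ω) ^ 2 ∂μ) = a * x ^ 2 + b₂ * x + c₂) :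
    |(-b₁ / (2 * a)) - (-b₂ / (2 * a))| ≤
      (Real.sqrt a)⁻¹ * Real.sqrt (∫ ω, (H₁ ω - H₂ ω) ^ 2 ∂μ) := by
  have hv_nonneg : ∀ (H : Ω → ℝ) (x : ℝ), 0 ≤ ⨅ θ : ι, ∫ ω, (H ω - x - G θ ω) ^ 2 ∂μ :=
    fun H x => Real.iInf_nonneg fun θ => integral_nonneg fun ω => sq_nonneg _
  refine abs_neg_div_sub_neg_div_le ha (fun x => hv₁ x ▸ hv_nonneg H₁ x)
    (fun x => hv₂ x ▸ hv_nonneg H₂ x) fun x => ?_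
  rw [← hv₁ x, ← hv₂ x]
  simpa only [Pi.sub_apply, sub_sub_sub_cancel_right] using
    abs_sqrt_iInf_integral_sq_sub_sub_le hG (hH₁.sub (memLp_const x)) (hH₂.sub (memLp_const x))

/-- Stability of the quadratic-hedging price with respect to the payoff:
`|x*₁ − x*₂| ≤ a^{-1/2} ‖H₁ − H₂‖_{L²}`. -/
theorem quadratic_hedging_price_stability
    {Ω : Type*} {m : MeasurableSpace Ω} {μ : Measure Ω} [IsProbabilityMeasure μ]
    {ι : Type*} [Nonempty ι] (G : ι → Ω → ℝ)
    (hG : ∀ θ, MemLp (G θ) 2 μ)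
    (hzero : ∃ θ₀, G θ₀ =ᵐ[μ] fun _ => (0 : ℝ))
    (hcone : ∀ θ (r : ℝ), ∃ θ', G θ' =ᵐ[μ] fun ω => r * G θ ω)
    (hadd : ∀ θ₁ θ₂, ∃ θ, G θ =ᵐ[μ] fun ω => G θ₁ ω + G θ₂ ω)
    (H₁ H₂ : Ω → ℝ) (hH₁ : MemLp H₁ 2 μ) (hH₂ : MemLp H₂ 2 μ)
    (a b₁ b₂ c₁ c₂ : ℝ) (ha : 0 < a)
    (hv₁ : ∀ x : ℝ, (⨅ θ : ι, ∫ ω, (H₁ ω - x - G θ ω) ^ 2 ∂μ) = a * x ^ 2 + b₁ * x + c₁)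
    (hv₂ : ∀ x : ℝ, (⨅ θ : ι, ∫ ω, (H₂ ω - x - G θ ω) ^ 2 ∂μ) = a * x ^ 2 + b₂ * x + c₂) :
    |(-b₁ / (2 * a)) - (-b₂ / (2 * a))| ≤
      (Real.sqrt a)⁻¹ * Real.sqrt (∫ ω, (H₁ ω - H₂ ω) ^ 2 ∂μ) :=
  quadratic_hedging_price_stability_general (m := m) G hG H₁ H₂ hH₁ hH₂ a b₁ b₂ c₁ c₂ ha hv₁ hv₂
end

section
/- Let v₁, v₂ : ℝ → ℝ be given by v_i(x) = inf_{θ∈A} E[(H_i − x − G(θ))²] with 0 ∈ A and H₁, H₂ ∈ L²(P). Then for every x ∈ ℝ: |v₁(x) − v₂(x)| ≤ (2|x| + ‖H₁‖₂ + ‖H₂‖₂ + ‖H₁ − H₂‖₂) ‖H₁ − H₂‖₂. -/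
/-!
Both values are squared distances in `L²(μ)`: `v_i(x) = (⨅ θ, ‖(H_i - x) - G θ‖₂)²`. The distance
`u ↦ ⨅ θ, ‖u - G θ‖₂` to a fixed family is 1-Lipschitz, so `|√v₁ - √v₂| ≤ ‖H₁ - H₂‖₂`, and
`v₁ - v₂ = (√v₁ - √v₂)(√v₁ + √v₂)`. Testing the infimum at the strategy with `G θ₀ = 0` gives
`√v_i ≤ ‖H_i - x‖₂ ≤ ‖H_i‖₂ + |x|`.
-/

open MeasureTheory

section NormInfimum

variable {E ι : Type*} [SeminormedAddCommGroup E]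

lemma bddBelow_range_norm_sub (g : ι → E) (u : E) : BddBelow (Set.range fun i => ‖u - g i‖) :=
  ⟨0, Set.forall_mem_range.2 fun _ => norm_nonneg _⟩

variable [Nonempty ι]

lemma iInf_norm_sub_le_iInf_norm_sub_add (g : ι → E) (u v : E) :
    ⨅ i, ‖u - g i‖ ≤ (⨅ i, ‖v - g i‖) + ‖u - v‖ := by
  rw [← sub_le_iff_le_add]
  refine le_ciInf fun i => sub_le_iff_le_add.2 ?_
  calc ⨅ j, ‖u - g j‖ ≤ ‖u - g i‖ := ciInf_le (bddBelow_range_norm_sub g u) i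
    _ ≤ ‖v - g i‖ + ‖u - v‖ := by
      rw [add_comm]
      exact norm_sub_le_norm_sub_add_norm_sub u v (g i)

lemma abs_iInf_norm_sub_sub_iInf_norm_sub_le (g : ι → E) (u v : E) :
    |(⨅ i, ‖u - g i‖) - ⨅ i, ‖v - g i‖| ≤ ‖u - v‖ := by
  rw [abs_sub_le_iff, sub_le_iff_le_add', sub_le_iff_le_add']
  exact ⟨iInf_norm_sub_le_iInf_norm_sub_add g u v,
    norm_sub_rev u v ▸ iInf_norm_sub_le_iInf_norm_sub_add g v u⟩

lemma iInf_norm_sub_sq (g : ι → E) (u : E) :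
    ⨅ i, ‖u - g i‖ ^ 2 = (⨅ i, ‖u - g i‖) ^ 2 := by
  have hsqrt : Real.sqrt (⨅ i, ‖u - g i‖ ^ 2) = ⨅ i, ‖u - g i‖ := by
    rw [Monotone.map_ciInf_of_continuousAt Real.continuous_sqrt.continuousAt
      (fun _ _ h => Real.sqrt_le_sqrt h) ⟨0, Set.forall_mem_range.2 fun _ => by positivity⟩]
    simp_rw [Real.sqrt_sq (norm_nonneg _)]
  rw [← hsqrt, Real.sq_sqrt (Real.iInf_nonneg fun _ => by positivity)]

lemma abs_iInf_norm_sub_sq_sub_iInf_norm_sub_sq_le (g : ι → E) (u v : E) (i₀ : ι) :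
    |(⨅ i, ‖u - g i‖ ^ 2) - ⨅ i, ‖v - g i‖ ^ 2| ≤ (‖u - g i₀‖ + ‖v - g i₀‖) * ‖u - v‖ := by
  rw [iInf_norm_sub_sq, iInf_norm_sub_sq, sq_sub_sq, abs_mul,
    abs_of_nonneg (add_nonneg (Real.iInf_nonneg fun _ => norm_nonneg _)
      (Real.iInf_nonneg fun _ => norm_nonneg _))]
  exact mul_le_mul
    (add_le_add (ciInf_le (bddBelow_range_norm_sub g u) i₀) (ciInf_le (bddBelow_range_norm_sub g v) i₀))
    (abs_iInf_norm_sub_sub_iInf_norm_sub_le g u v) (abs_nonneg _) (by positivity)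

end NormInfimum

section L2

variable {Ω : Type*} {m : MeasurableSpace Ω} {μ : Measure Ω}

lemma integral_sq_eq_norm_toLp_sq {f : Ω → ℝ} (hf : MemLp f 2 μ) :
    ∫ ω, f ω ^ 2 ∂μ = ‖hf.toLp f‖ ^ 2 := by
  rw [← real_inner_self_eq_norm_sq, L2.inner_def]
  refine integral_congr_ae ?_
  filter_upwards [hf.coeFn_toLp] with ω hω
  simp [hω, sq]

lemma sqrt_integral_sq_eq_norm_toLp {f : Ω → ℝ} (hf : MemLp f 2 μ) :
    Real.sqrt (∫ ω, f ω ^ 2 ∂μ) = ‖hf.toLp f‖ := by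
  rw [integral_sq_eq_norm_toLp_sq hf, Real.sqrt_sq (norm_nonneg _)]

end L2

/-- Stability of the quadratic-hedging value function with respect to the payoff. -/
theorem quadratic_hedging_value_stability
    {Ω : Type*} {m : MeasurableSpace Ω} {μ : Measure Ω} [IsProbabilityMeasure μ]
    {ι : Type*} [Nonempty ι] (G : ι → Ω → ℝ)
    (hG : ∀ θ, MemLp (G θ) 2 μ)
    (hzero : ∃ θ₀, G θ₀ =ᵐ[μ] fun _ => (0 : ℝ))
    (H₁ H₂ : Ω → ℝ) (hH₁ : MemLp H₁ 2 μ) (hH₂ : MemLp H₂ 2 μ)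
    (x : ℝ) :
    |(⨅ θ : ι, ∫ ω, (H₁ ω - x - G θ ω) ^ 2 ∂μ) -
        (⨅ θ : ι, ∫ ω, (H₂ ω - x - G θ ω) ^ 2 ∂μ)| ≤
      (2 * |x| + Real.sqrt (∫ ω, (H₁ ω) ^ 2 ∂μ) + Real.sqrt (∫ ω, (H₂ ω) ^ 2 ∂μ) +
          Real.sqrt (∫ ω, (H₁ ω - H₂ ω) ^ 2 ∂μ)) *
        Real.sqrt (∫ ω, (H₁ ω - H₂ ω) ^ 2 ∂μ) := by
  obtain ⟨θ₀, hθ₀⟩ := hzero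
  have hvalue : ∀ {H : Ω → ℝ} (hH : MemLp H 2 μ) θ, ∫ ω, (H ω - x - G θ ω) ^ 2 ∂μ =
      ‖hH.toLp H - Lp.const 2 μ x - (hG θ).toLp (G θ)‖ ^ 2 := fun hH θ => by
    rw [← MemLp.toLp_const, ← MemLp.toLp_sub, ← MemLp.toLp_sub, ← integral_sq_eq_norm_toLp_sq]
    rfl
  have hG₀ : (hG θ₀).toLp (G θ₀) = 0 :=
    Lp.eq_zero_iff_ae_eq_zero.2 ((hG θ₀).coeFn_toLp.trans hθ₀)
  have hdiff : Real.sqrt (∫ ω, (H₁ ω - H₂ ω) ^ 2 ∂μ) = ‖hH₁.toLp H₁ - hH₂.toLp H₂‖ := by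
    rw [← MemLp.toLp_sub, ← sqrt_integral_sq_eq_norm_toLp]
    rfl
  have hconst : ‖Lp.const 2 μ x‖ = |x| := by simp [Lp.norm_const]
  simp_rw [hvalue hH₁, hvalue hH₂]
  rw [sqrt_integral_sq_eq_norm_toLp hH₁, sqrt_integral_sq_eq_norm_toLp hH₂, hdiff]
  refine (abs_iInf_norm_sub_sq_sub_iInf_norm_sub_sq_le _ _ _ θ₀).trans ?_
  rw [hG₀, sub_zero, sub_zero, sub_sub_sub_cancel_right]
  have h₁ := hconst ▸ norm_sub_le (hH₁.toLp H₁) (Lp.const 2 μ x)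
  have h₂ := hconst ▸ norm_sub_le (hH₂.toLp H₂) (Lp.const 2 μ x)
  exact mul_le_mul_of_nonneg_right
    (by linarith [norm_nonneg (hH₁.toLp H₁ - hH₂.toLp H₂)]) (norm_nonneg _)
end
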